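/- arXiv:2009.05774 — 2 statements merged into one kernel-verified Lean document; each statement's English description precedes it below -/
import Mathlib

section
/- The left and right reducts of a propositional Horn theory are computed by composition with restricted unit theories: for every theory P over A and every I ⊆ A, 1^I ∘ P = ^I P and P ∘ 1^I = P^I; consequently 1^I ∘ P ∘ 1^I = {r ∈ P | head r ∈ I and body r ⊆ I}. -/
/-- A propositional Horn theory over atoms `A`: a finite set of rules `(head, body)`. -/
abbrev Theory (A : Type*) := Finset (A × Finset A)

variable {A : Type*} [Fintype A] [DecidableEq A]

/-- Heads of a (sub)theory. -/
def heads (S : Theory A) : Finset A := S.image Prod.fst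

/-- Body atoms of a (sub)theory. -/
def bodies (S : Theory A) : Finset A := S.biUnion Prod.snd

/-- Sequential composition of propositional Horn theories. -/
def comp (P R : Theory A) : Theory A :=
  P.biUnion fun r =>
    (R.powerset.filter fun S => S.card = r.2.card ∧ heads S = r.2).image
      fun S => (r.1, bodies S)

/-- The unit theory `1_A = {a ← a | a ∈ A}`. -/
def unitTheory (A : Type*) [Fintype A] [DecidableEq A] : Theory A :=
  Finset.univ.image fun a => (a, ({a} : Finset A))

/-- The theory associated with an interpretation `I ⊆ A`. -/
def interp (I : Finset A) : Theory A := I.image fun a => (a, (∅ : Finset A))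

/-- The van Emden–Kowalski operator. -/
def vek (P : Theory A) (I : Finset A) : Finset A :=
  (P.filter fun r => r.2 ⊆ I).image Prod.fst

/-- The facts (rules with empty body) of a theory. -/
def facts (P : Theory A) : Theory A := P.filter fun r => r.2 = ∅

/-- The proper rules (rules with nonempty body) of a theory. -/
def proper (P : Theory A) : Theory A := P.filter fun r => r.2 ≠ ∅

/-- The left reduct `^I P`. -/
def leftReduct (I : Finset A) (P : Theory A) : Theory A := P.filter fun r => r.1 ∈ I

/-- The right reduct `P^I`. -/
def rightReduct (P : Theory A) (I : Finset A) : Theory A := P.filter fun r => r.2 ⊆ I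

/-- The restricted unit theory `1^I = {a ← a | a ∈ I}`. -/
def unitOn (I : Finset A) : Theory A := I.image fun a => (a, ({a} : Finset A))

/-- The closure `cl_B(P) = {b ← b | b ∈ B} ∪ P`. -/
def cl (B : Finset A) (P : Theory A) : Theory A :=
  (B.image fun b => (b, ({b} : Finset A))) ∪ P

lemma mem_unitOn {I : Finset A} {s : A × Finset A} :
    s ∈ unitOn I ↔ s.1 ∈ I ∧ s.2 = {s.1} := by
  constructor
  · intro hs
    simp only [unitOn, Finset.mem_image] at hs
    obtain ⟨a, ha, rfl⟩ := hs
    exact ⟨ha, rfl⟩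
  · rintro ⟨h1, h2⟩
    simp only [unitOn, Finset.mem_image]
    exact ⟨s.1, h1, by rw [← h2]⟩

lemma mem_comp {P R : Theory A} {x : A × Finset A} :
    x ∈ comp P R ↔ ∃ r ∈ P, ∃ S ⊆ R, S.card = r.2.card ∧ heads S = r.2 ∧
      x = (r.1, bodies S) := by
  simp only [comp, Finset.mem_biUnion, Finset.mem_image, Finset.mem_filter,
    Finset.mem_powerset]
  constructor
  · rintro ⟨r, hr, S, ⟨hS, h1, h2⟩, rfl⟩
    exact ⟨r, hr, S, hS, h1, h2, rfl⟩
  · rintro ⟨r, hr, S, hS, h1, h2, rfl⟩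
    exact ⟨r, hr, S, ⟨hS, h1, h2⟩, rfl⟩

lemma unit_comp (P : Theory A) (I : Finset A) :
    comp (unitOn I) P = leftReduct I P := by
  ext x
  rw [mem_comp]
  simp only [leftReduct, Finset.mem_filter]
  constructor
  · rintro ⟨r, hr, S, hS, hcard, hheads, rfl⟩
    obtain ⟨haI, hb⟩ := mem_unitOn.mp hr
    rw [hb, Finset.card_singleton] at hcard
    obtain ⟨s, rfl⟩ := Finset.card_eq_one.mp hcard
    have hs := hS (Finset.mem_singleton_self s)
    have hh : heads {s} = {s.1} := by simp [heads]
    rw [hh, hb] at hheads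
    have hs1 : s.1 = r.1 := Finset.singleton_injective hheads
    have hbod : bodies {s} = s.2 := by simp [bodies]
    rw [hbod, ← hs1]
    exact ⟨by simpa using hs, by rw [hs1]; exact haI⟩
  · rintro ⟨hx, hxI⟩
    refine ⟨(x.1, {x.1}), mem_unitOn.mpr ⟨hxI, rfl⟩, {x}, ?_, ?_, ?_, ?_⟩
    · simpa using hx
    · simp
    · simp [heads]
    · simp [bodies]

lemma bodies_of_subset_unitOn {I : Finset A} {S : Theory A} (hS : S ⊆ unitOn I) :
    bodies S = heads S := by
  ext b
  simp only [bodies, heads, Finset.mem_biUnion, Finset.mem_image]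
  constructor
  · rintro ⟨s, hs, hb⟩
    have := (mem_unitOn.mp (hS hs)).2
    rw [this, Finset.mem_singleton] at hb
    exact ⟨s, hs, hb.symm⟩
  · rintro ⟨s, hs, hb⟩
    have := (mem_unitOn.mp (hS hs)).2
    exact ⟨s, hs, by rw [this, hb]; exact Finset.mem_singleton_self _⟩

lemma comp_unit (P : Theory A) (I : Finset A) :
    comp P (unitOn I) = rightReduct P I := by
  ext x
  rw [mem_comp]
  simp only [rightReduct, Finset.mem_filter]
  constructor
  · rintro ⟨r, hr, S, hS, hcard, hheads, rfl⟩
    have hb : bodies S = r.2 := by rw [bodies_of_subset_unitOn hS, hheads]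
    have hsub : r.2 ⊆ I := by
      rw [← hheads]
      intro b hb'
      simp only [heads, Finset.mem_image] at hb'
      obtain ⟨s, hs, rfl⟩ := hb'
      exact (mem_unitOn.mp (hS hs)).1
    rw [hb]
    exact ⟨hr, hsub⟩
  · rintro ⟨hx, hsub⟩
    refine ⟨x, hx, x.2.image (fun b => (b, ({b} : Finset A))), ?_, ?_, ?_, ?_⟩
    · intro s hs
      simp only [Finset.mem_image] at hs
      obtain ⟨b, hb, rfl⟩ := hs
      exact mem_unitOn.mpr ⟨hsub hb, rfl⟩
    · exact Finset.card_image_of_injective _ (fun a b h => (Prod.mk.injEq _ _ _ _ ▸ h).1)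
    · ext b
      simp [heads, Finset.mem_image]
    · have : bodies (x.2.image (fun b => (b, ({b} : Finset A)))) = x.2 := by
        ext b
        simp [bodies]
      rw [this]

/-- Left and right reducts are computed by composition with restricted unit
theories, and both reducts together compute the restriction of the theory. -/
theorem reducts_via_comp (P : Theory A) (I : Finset A) :
    comp (unitOn I) P = leftReduct I P ∧
    comp P (unitOn I) = rightReduct P I ∧
    comp (comp (unitOn I) P) (unitOn I) =
      P.filter fun r => r.1 ∈ I ∧ r.2 ⊆ I := by
  refine ⟨unit_comp P I, comp_unit P I, ?_⟩
  rw [unit_comp, comp_unit, leftReduct, rightReduct, Finset.filter_filter]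
end

section
/- The van Emden–Kowalski operator is represented by composition: for every propositional Horn theory P over A and every I ⊆ A, P ∘ ⟨I⟩ = ⟨T_P(I)⟩. -/
variable {A : Type*} [Fintype A] [DecidableEq A]

/-- The van Emden–Kowalski operator is represented by composition:
`P ∘ I = T_P(I)`. -/
theorem comp_interp_eq_vek (P : Theory A) (I : Finset A) :
    comp P (interp I) = interp (vek P I) := by
  ext ⟨a, b⟩
  simp only [comp, interp, vek, Finset.mem_biUnion, Finset.mem_image, Finset.mem_filter,
    Finset.mem_powerset, Prod.mk.injEq, Prod.exists]
  constructor
  · rintro ⟨rh, rb, hr, S, ⟨hS, hcard, hheads⟩, ha, hb⟩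
    have hSmem : ∀ s ∈ S, s.2 = (∅ : Finset A) ∧ s.1 ∈ I := by
      intro s hs
      obtain ⟨x, hx, hxs⟩ := Finset.mem_image.mp (hS hs)
      constructor
      · rw [← hxs]
      · rw [← hxs]; exact hx
    refine ⟨a, ⟨rh, rb, ⟨hr, ?_⟩, ha⟩, rfl, ?_⟩
    · rw [← hheads]
      intro x hx
      obtain ⟨s, hs, hsx⟩ := Finset.mem_image.mp hx
      rw [← hsx]; exact (hSmem s hs).2
    · rw [← hb]
      symm
      simp only [bodies, Finset.eq_empty_iff_forall_notMem, Finset.mem_biUnion]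
      rintro x ⟨s, hs, hxs⟩
      rw [(hSmem s hs).1] at hxs
      exact absurd hxs (Finset.notMem_empty x)
  · rintro ⟨x, ⟨h, t, ⟨hP, hsub⟩, rfl⟩, rfl, he⟩
    refine ⟨h, t, hP, t.image fun y => (y, (∅ : Finset A)), ⟨?_, ?_, ?_⟩, rfl, ?_⟩
    · intro s hs
      obtain ⟨y, hy, rfl⟩ := Finset.mem_image.mp hs
      exact Finset.mem_image.mpr ⟨y, hsub hy, rfl⟩
    · exact Finset.card_image_of_injective _ (fun y z h => by simpa using h)
    · ext y
      simp [heads]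
    · rw [← he]
      simp only [bodies, Finset.eq_empty_iff_forall_notMem, Finset.mem_biUnion]
      rintro y ⟨s, hs, hys⟩
      obtain ⟨z, _, rfl⟩ := Finset.mem_image.mp hs
      exact absurd hys (Finset.notMem_empty y)
end
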